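/- For all c, s ∈ ℕ⁺, there exists σ = σ(c,s) ∈ ℕ⁺ with the following property. Let G be a graph and let (W,Λ) be a σ-web in G. Then one of the following holds: (a) there exist disjoint subsets 𝓒 and 𝓒' of the set of 2-subsets of W, with |𝓒| = |𝓒'| = c, such that for every {x,y} ∈ 𝓒 and every {x',y'} ∈ 𝓒', the sets Λ*_{x,y} and Λ*_{x',y'} are not anticomplete in G; or (b) there exists S ⊆ W with |S| = s such that for all distinct 2-subsets {x,y}, {x',y'} of S, the sets Λ*_{x,y} and Λ*_{x',y'} are anticomplete in G. -/

import Mathlib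

/-!
Common definitions: anticomplete sets, stable sets, induced paths,
and webs, following the paper's terminology.
-/

variable {V : Type} {α : Type}

/-- Two vertex sets `X` and `Y` are *anticomplete* in `G` if there is no edge of `G`
with an end in `X` and an end in `Y`. -/
def Anticomplete (G : SimpleGraph V) (X Y : Set V) : Prop :=
  ∀ ⦃x⦄, x ∈ X → ∀ ⦃y⦄, y ∈ Y → ¬ G.Adj x y

/-- A *stable set* in `G` is a set of pairwise non-adjacent vertices. -/
def StableSet (G : SimpleGraph V) (S : Set V) : Prop :=
  ∀ ⦃x⦄, x ∈ S → ∀ ⦃y⦄, y ∈ S → ¬ G.Adj x y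

/-- A walk `p` is a *path in `G`* in the sense of the paper: a path which is moreover
an induced subgraph of `G` (no repeated vertices, and every edge of `G` between two
vertices of `p` is an edge of `p`). -/
def IsInducedPath (G : SimpleGraph V) {x y : V} (p : G.Walk x y) : Prop :=
  p.IsPath ∧ ∀ u v, u ∈ p.support → v ∈ p.support → G.Adj u v → s(u, v) ∈ p.edges

/-- The vertex set of a walk. -/
def walkVerts (G : SimpleGraph V) {x y : V} (p : G.Walk x y) : Set V :=
  {v | v ∈ p.support}

/-- The *interior* of a path with ends `x` and `y`: all of its vertices other than
its ends. -/
def walkInterior (G : SimpleGraph V) {x y : V} (p : G.Walk x y) : Set V :=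
  {v | v ∈ p.support} \ {x, y}

/-- `(W, Λ)` is a *web* in `G`: `Λ` assigns to each (ordered, for convenience of
formalization) pair of distinct vertices of `W` a path in `G` between them, the paths
assigned to `(x, y)` and `(y, x)` being reverses of one another (so that `Λ` really
is defined on 2-subsets of `W`), and the paths assigned to distinct 2-subsets
`{x, y}` and `{x', y'}` meet exactly in `{x, y} ∩ {x', y'}`. -/
structure IsWeb (G : SimpleGraph V) (W : Finset V)
    (Λ : ∀ x y : V, x ∈ W → y ∈ W → x ≠ y → G.Walk x y) : Prop where
  path : ∀ x y (hx : x ∈ W) (hy : y ∈ W) (hxy : x ≠ y), IsInducedPath G (Λ x y hx hy hxy)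
  symm : ∀ x y (hx : x ∈ W) (hy : y ∈ W) (hxy : x ≠ y),
    Λ y x hy hx hxy.symm = (Λ x y hx hy hxy).reverse
  inter : ∀ x y x' y' (hx : x ∈ W) (hy : y ∈ W) (hx' : x' ∈ W) (hy' : y' ∈ W)
      (hxy : x ≠ y) (hxy' : x' ≠ y'), ({x, y} : Set V) ≠ {x', y'} →
      walkVerts G (Λ x y hx hy hxy) ∩ walkVerts G (Λ x' y' hx' hy' hxy') =
        ({x, y} : Set V) ∩ {x', y'}

/-!
Colour every increasing 4-tuple of vertices of `W` (in a fixed enumeration) by the set of pairs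
`(D, D')` of position sets `D, D' ⊆ Fin 4` whose corresponding interiors are not anticomplete.
By the hypergraph Ramsey theorem there is a long sequence of vertices all of whose increasing
4-tuples get the same colour. If that colour contains a pair `(D, D')` of distinct 2-sets, lay out
`4(c + 1)` terms of the sequence as four blocks, one per position: each pair of the first family
takes the `m`-th point of the blocks in `D`, each pair of the second family the `m'`-th point of
the blocks in `D'`, both using a common last point on the blocks in `D ∩ D'`. Any two such pairs
then lie in one increasing 4-tuple at positions `D` and `D'`, which gives (a). Otherwise no two
distinct pairs of terms of the sequence touch, since any two lie in a common 4-tuple, giving (b).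
-/

open Finset Function

def RamseyProperty (κ : Type) (k : ℕ) : Prop :=
  ∀ n, ∃ N, ∀ {α : Type} [LinearOrder α] (C : Finset α → κ) (V : Finset α), N ≤ #V →
    ∃ U ⊆ V, #U = n ∧ ∃ c₀, ∀ A ⊆ U, #A = k → C A = c₀

namespace RamseyProperty

variable {κ : Type}

theorem zero : RamseyProperty κ 0 := fun n ↦ ⟨n, fun C V hV ↦ by
  obtain ⟨U, hUV, hU⟩ := exists_subset_card_eq hV
  exact ⟨U, hUV, hU, C ∅, fun A _ hA ↦ by rw [card_eq_zero.1 hA]⟩⟩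

theorem exists_colour_eq_of_min {k : ℕ} (h : RamseyProperty κ k) (m : ℕ) :
    ∃ M, ∀ {α : Type} [LinearOrder α] (C : Finset α → κ) (V : Finset α), M ≤ #V →
      ∃ T ⊆ V, #T = m ∧ ∃ f : α → κ, ∀ x ∈ T, ∀ A ⊆ T, #A = k → (∀ y ∈ A, x < y) →
        C (insert x A) = f x := by
  induction m with
  | zero =>
    exact ⟨0, fun C V _ ↦ ⟨∅, empty_subset _, card_empty, fun _ ↦ C ∅, by simp⟩⟩
  | succ m ih =>
    obtain ⟨M, hM⟩ := ih
    obtain ⟨N, hN⟩ := h M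
    refine ⟨N + 1, fun C V hV ↦ ?_⟩
    have hVne : V.Nonempty := card_pos.1 (by omega)
    set a := V.min' hVne
    have haV : a ∈ V := V.min'_mem hVne
    obtain ⟨U, hUV, hU, c₀, hc₀⟩ :=
      hN (fun S ↦ C (insert a S)) (V.erase a) (by rw [card_erase_of_mem haV]; omega)
    obtain ⟨T, hTU, hT, f, hf⟩ := hM C U hU.ge
    have hTV : T ⊆ V.erase a := hTU.trans hUV
    have haT : a ∉ T := fun ha ↦ by simpa using hTV ha
    have hlt : ∀ x ∈ T, a < x := fun x hx ↦
      (V.min'_le x (mem_of_mem_erase (hTV hx))).lt_of_ne (ne_of_mem_erase (hTV hx)).symm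
    refine ⟨insert a T, insert_subset haV (hTV.trans (erase_subset _ _)),
      by rw [card_insert_of_notMem haT, hT], update f a c₀, ?_⟩
    intro x hx A hA hAk hxA
    have hAT : A ⊆ T := fun y hy ↦ by
      rcases mem_insert.1 (hA hy) with rfl | hyT
      · rcases mem_insert.1 hx with rfl | hxT
        · exact absurd (hxA _ hy) (lt_irrefl _)
        · exact absurd ((hlt x hxT).trans (hxA _ hy)) (lt_irrefl _)
      · exact hyT
    rcases mem_insert.1 hx with rfl | hxT
    · rw [update_self]
      exact hc₀ A (hAT.trans hTU) hAk
    · rw [update_of_ne (hlt x hxT).ne']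
      exact hf x hxT A hAT hAk hxA

theorem succ [Fintype κ] [Nonempty κ] {k : ℕ} (h : RamseyProperty κ k) :
    RamseyProperty κ (k + 1) := fun n ↦ by
  classical
  obtain ⟨M, hM⟩ := h.exists_colour_eq_of_min (Fintype.card κ * n)
  refine ⟨M, fun C V hV ↦ ?_⟩
  obtain ⟨T, hTV, hT, f, hf⟩ := hM C V hV
  obtain ⟨c₀, -, hfib⟩ := exists_le_card_fiber_of_mul_le_card_of_maps_to
    (fun x _ ↦ mem_univ (f x)) univ_nonempty (by rw [card_univ, hT])
  obtain ⟨U, hUfib, hU⟩ := exists_subset_card_eq hfib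
  have hUT : U ⊆ T := hUfib.trans (filter_subset _ _)
  refine ⟨U, hUT.trans hTV, hU, c₀, fun A hAU hAk ↦ ?_⟩
  have hAne : A.Nonempty := card_pos.1 (by omega)
  have hx : A.min' hAne ∈ A := A.min'_mem hAne
  rw [← insert_erase hx, hf _ (hUT (hAU hx)) _ ((erase_subset _ _).trans (hAU.trans hUT))
    (by rw [card_erase_of_mem hx, hAk]; rfl)
    (fun y hy ↦ (A.min'_le y (mem_of_mem_erase hy)).lt_of_ne (ne_of_mem_erase hy).symm)]
  exact (mem_filter.1 (hUfib (hAU hx))).2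

end RamseyProperty

theorem ramseyProperty (κ : Type) [Fintype κ] [Nonempty κ] (k : ℕ) : RamseyProperty κ k := by
  induction k with
  | zero => exact .zero
  | succ k ih => exact ih.succ

theorem exists_orderEmbedding_forall_trans_eq (κ : Type) [Fintype κ] [Nonempty κ] (k n : ℕ) :
    ∃ N, ∀ χ : (Fin k ↪o Fin N) → κ, ∃ u : Fin n ↪o Fin N, ∃ c₀, ∀ p : Fin k ↪o Fin n,
      χ (p.trans u) = c₀ := by
  classical
  obtain ⟨N, hN⟩ := ramseyProperty κ k n
  refine ⟨N, fun χ ↦ ?_⟩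
  obtain ⟨U, -, hU, c₀, hc₀⟩ :=
    hN (fun A ↦ if hA : #A = k then χ (A.orderEmbOfFin hA) else Classical.arbitrary κ) univ
      (by rw [card_univ, Fintype.card_fin])
  refine ⟨U.orderEmbOfFin hU, c₀, fun p ↦ ?_⟩
  set q := p.trans (U.orderEmbOfFin hU)
  have hA : #(univ.map q.toEmbedding) = k := by simp
  have hq : q = (univ.map q.toEmbedding).orderEmbOfFin hA :=
    orderEmbOfFin_unique' hA fun i ↦ mem_map_of_mem _ (mem_univ i)
  have := hc₀ _ (fun _ h ↦ by
    obtain ⟨i, -, rfl⟩ := mem_map.1 h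
    exact U.orderEmbOfFin_mem hU _) hA
  rwa [dif_pos hA, ← hq] at this

theorem Finset.exists_mem_notMem_of_card_eq_of_ne {α : Type*} {s t : Finset α} (h : #s = #t)
    (hne : s ≠ t) : ∃ a ∈ s, a ∉ t :=
  not_subset.1 fun hst ↦ hne (eq_of_subset_of_card_le hst h.ge)

section Blocks

variable {β : Type} [DecidableEq β] {c : ℕ}

/-- The point of block `t` used by the `m`-th pair of a family; blocks in `K` contribute their
last point, which is shared with the other family. -/
def blockPoint (K : Finset (Fin 4)) (m : Fin c) (t : Fin 4) : Fin 4 ×ₗ Fin (c + 1) :=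
  toLex (t, if t ∈ K then Fin.last c else m.castSucc)

def blockPair (g : Fin 4 ×ₗ Fin (c + 1) → β) (D K : Finset (Fin 4)) (m : Fin c) : Finset β :=
  D.image (g ∘ blockPoint K m)

theorem blockPoint_injective (K : Finset (Fin 4)) (m : Fin c) : Injective (blockPoint K m) :=
  fun _ _ h ↦ congrArg Prod.fst (congrArg ofLex h)

theorem blockPoint_lt_blockPoint (K K' : Finset (Fin 4)) (m m' : Fin c) {t t' : Fin 4}
    (h : t < t') : blockPoint K m t < blockPoint K' m' t' :=
  Prod.Lex.toLex_lt_toLex.2 (Or.inl h)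

variable {g : Fin 4 ×ₗ Fin (c + 1) → β}

theorem mem_blockPair_iff (hg : Injective g) {D K K' : Finset (Fin 4)} {m m' : Fin c}
    {t : Fin 4} :
    g (blockPoint K m t) ∈ blockPair g D K' m' ↔
      t ∈ D ∧ blockPoint K m t = blockPoint K' m' t := by
  simp only [blockPair, mem_image, comp_apply, hg.eq_iff]
  constructor
  · rintro ⟨t', ht', h⟩
    obtain rfl := congrArg Prod.fst (congrArg ofLex h)
    exact ⟨ht', h.symm⟩
  · rintro ⟨ht, h⟩
    exact ⟨t, ht, h.symm⟩

theorem card_blockPair (hg : Injective g) (D K : Finset (Fin 4)) (m : Fin c) :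
    #(blockPair g D K m) = #D :=
  card_image_of_injective _ (hg.comp (blockPoint_injective K m))

theorem blockPair_injective (hg : Injective g) {D K : Finset (Fin 4)} {t : Fin 4}
    (htD : t ∈ D) (htK : t ∉ K) : Injective (blockPair g D K) := fun m m' h ↦ by
  have hmem : g (blockPoint K m t) ∈ blockPair g D K m' := h ▸ mem_image_of_mem _ htD
  have := congrArg Prod.snd (congrArg ofLex ((mem_blockPair_iff hg).1 hmem).2)
  simpa [blockPoint, htK] using this

theorem blockPair_ne (hg : Injective g) {D D' : Finset (Fin 4)} {t : Fin 4} (htD : t ∈ D)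
    (htD' : t ∉ D') (m m' : Fin c) : blockPair g D D' m ≠ blockPair g D' D m' := fun h ↦
  htD' ((mem_blockPair_iff hg).1 (by rw [← h]; exact mem_image_of_mem _ htD)).1

theorem exists_orderEmbedding_blockPair (g : Fin 4 ×ₗ Fin (c + 1) → β) (D D' : Finset (Fin 4))
    (m m' : Fin c) : ∃ p : Fin 4 ↪o Fin 4 ×ₗ Fin (c + 1),
      D.image (g ∘ p) = blockPair g D D' m ∧ D'.image (g ∘ p) = blockPair g D' D m' := by
  let p : Fin 4 → Fin 4 ×ₗ Fin (c + 1) := fun t ↦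
    if t ∈ D' then blockPoint D m' t else blockPoint D' m t
  have hp : StrictMono p := fun t t' h ↦ by
    simp only [p]
    split_ifs <;> exact blockPoint_lt_blockPoint _ _ _ _ h
  refine ⟨OrderEmbedding.ofStrictMono p hp, image_congr fun t ht ↦ ?_, image_congr fun t ht ↦ ?_⟩
  · by_cases ht' : t ∈ D' <;> simp [p, blockPoint, mem_coe.1 ht, ht']
  · simp [p, mem_coe.1 ht]

theorem exists_crossing_families (T : Finset β → Finset β → Prop) (hg : Injective g)
    {D D' : Finset (Fin 4)} (hD : #D = 2) (hD' : #D' = 2) (hne : D ≠ D')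
    (hT : ∀ p : Fin 4 ↪o Fin 4 ×ₗ Fin (c + 1), T (D.image (g ∘ p)) (D'.image (g ∘ p))) :
    ∃ 𝓒 𝓒' : Finset (Finset β), Disjoint 𝓒 𝓒' ∧ #𝓒 = c ∧ #𝓒' = c ∧
      (∀ C ∈ 𝓒 ∪ 𝓒', #C = 2 ∧ ↑C ⊆ Set.range g) ∧ ∀ C ∈ 𝓒, ∀ C' ∈ 𝓒', T C C' := by
  obtain ⟨t, htD, htD'⟩ := exists_mem_notMem_of_card_eq_of_ne (hD.trans hD'.symm) hne
  obtain ⟨t', ht'D', ht'D⟩ := exists_mem_notMem_of_card_eq_of_ne (hD'.trans hD.symm) hne.symm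
  refine ⟨univ.image (blockPair g D D'), univ.image (blockPair g D' D), ?_, ?_, ?_, ?_, ?_⟩
  · simp only [disjoint_left, mem_image, mem_univ, true_and]
    rintro _ ⟨m, rfl⟩ ⟨m', hm'⟩
    exact blockPair_ne hg htD htD' m m' hm'.symm
  · rw [card_image_of_injective _ (blockPair_injective hg htD htD'), card_univ, Fintype.card_fin]
  · rw [card_image_of_injective _ (blockPair_injective hg ht'D' ht'D), card_univ, Fintype.card_fin]
  · simp only [mem_union, mem_image, mem_univ, true_and]
    rintro _ (⟨m, rfl⟩ | ⟨m, rfl⟩) <;>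
      exact ⟨by rw [card_blockPair hg]; assumption, by
        rw [blockPair, coe_image]
        exact (Set.image_subset_range _ _).trans (Set.range_comp_subset_range _ _)⟩
  · simp only [mem_image, mem_univ, true_and]
    rintro _ ⟨m, rfl⟩ _ ⟨m', rfl⟩
    obtain ⟨p, hp, hp'⟩ := exists_orderEmbedding_blockPair g D D' m m'
    exact hp ▸ hp' ▸ hT p

end Blocks

theorem not_rel_of_forall_orderEmbedding {β ι : Type} [DecidableEq β] [Fintype ι] [LinearOrder ι]
    (T : Finset β → Finset β → Prop) {g : ι → β} (hg : Injective g)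
    (hι : 4 ≤ Fintype.card ι)
    (hT : ∀ p : Fin 4 ↪o ι, ∀ D D' : Finset (Fin 4), #D = 2 → #D' = 2 → D ≠ D' →
      ¬ T (D.image (g ∘ p)) (D'.image (g ∘ p)))
    {C C' : Finset β} (hC : C ⊆ univ.image g) (hC' : C' ⊆ univ.image g) (h2 : #C = 2)
    (h2' : #C' = 2) (hne : C ≠ C') : ¬ T C C' := by
  classical
  obtain ⟨E, -, rfl⟩ := subset_image_iff.1 hC
  obtain ⟨E', -, rfl⟩ := subset_image_iff.1 hC'
  rw [card_image_of_injective _ hg] at h2 h2'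
  obtain ⟨F, hEF, hF⟩ := exists_superset_card_eq (s := E ∪ E') (n := 4)
    ((card_union_le _ _).trans (by omega)) hι
  let φ := F.orderEmbOfFin hF
  have hF : F = univ.image φ := (image_orderEmbOfFin_univ F hF).symm
  obtain ⟨D, -, rfl⟩ := subset_image_iff.1 (hF ▸ subset_union_left.trans hEF)
  obtain ⟨D', -, rfl⟩ := subset_image_iff.1 (hF ▸ subset_union_right.trans hEF)
  rw [card_image_of_injective _ φ.injective] at h2 h2'
  rw [image_image, image_image]
  exact hT φ D D' h2 h2' (fun h ↦ hne (by rw [h]))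

theorem exists_crossing_families_or_free_subset (c s : ℕ) :
    ∃ N, ∀ {β : Type} [DecidableEq β] (T : Finset β → Finset β → Prop) (W : Finset β),
      N ≤ #W →
      (∃ 𝓒 𝓒' : Finset (Finset β), Disjoint 𝓒 𝓒' ∧ #𝓒 = c ∧ #𝓒' = c ∧
        (∀ C ∈ 𝓒 ∪ 𝓒', #C = 2 ∧ C ⊆ W) ∧ ∀ C ∈ 𝓒, ∀ C' ∈ 𝓒', T C C') ∨
      (∃ S ⊆ W, #S = s ∧ ∀ C ⊆ S, ∀ C' ⊆ S, #C = 2 → #C' = 2 → C ≠ C' → ¬ T C C') := by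
  classical
  obtain ⟨N, hN⟩ := exists_orderEmbedding_forall_trans_eq
    (Finset (Fin 4) → Finset (Fin 4) → Prop) 4 (s + 4 * (c + 1))
  refine ⟨N, fun T W hW ↦ ?_⟩
  obtain ⟨f, hfW⟩ := Function.Embedding.exists_of_card_le_finset (α := Fin N) (by simpa using hW)
  obtain ⟨u, c₀, hc₀⟩ := hN fun q D D' ↦ T (D.image (f ∘ q)) (D'.image (f ∘ q))
  have hg : Injective (f ∘ u) := f.injective.comp u.injective
  have hom : ∀ p : Fin 4 ↪o Fin (s + 4 * (c + 1)), ∀ D D',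
      T (D.image (f ∘ u ∘ p)) (D'.image (f ∘ u ∘ p)) ↔ c₀ D D' := fun p D D' ↦ by
    rw [← hc₀ p]; rfl
  by_cases hcase : ∃ D D', #D = 2 ∧ #D' = 2 ∧ D ≠ D' ∧ c₀ D D'
  · obtain ⟨D, D', hD, hD', hne, hc⟩ := hcase
    let e : Fin 4 ×ₗ Fin (c + 1) ↪o Fin (s + 4 * (c + 1)) :=
      (Fintype.orderIsoFinOfCardEq _ (k := 4 * (c + 1)) (by simp)).symm.toOrderEmbedding.trans
        (Fin.castLEOrderEmb (Nat.le_add_left _ _))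
    obtain ⟨𝓒, 𝓒', hdisj, h𝓒, h𝓒', hpairs, hT⟩ :=
      exists_crossing_families T (hg.comp e.injective) hD hD' hne
        fun p ↦ (hom (p.trans e) D D').2 hc
    refine Or.inl ⟨𝓒, 𝓒', hdisj, h𝓒, h𝓒', fun C hC ↦ ⟨(hpairs C hC).1, ?_⟩, hT⟩
    exact coe_subset.1 ((hpairs C hC).2.trans
      ((Set.range_comp_subset_range _ _).trans ((Set.range_comp_subset_range _ _).trans hfW)))
  · push Not at hcase
    obtain ⟨S, hS, hSs⟩ := exists_subset_card_eq (s := univ.image (f ∘ u)) (n := s)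
      (by rw [card_image_of_injective _ hg, card_univ, Fintype.card_fin]; omega)
    refine Or.inr ⟨S, fun x hx ↦ ?_, hSs, fun C hC C' hC' h2 h2' hne ↦
      not_rel_of_forall_orderEmbedding T hg (by rw [Fintype.card_fin]; omega)
        (fun p D D' hD hD' hDD' ↦ (hom p D D').not.2 (hcase D D' hD hD' hDD'))
        (hC.trans hS) (hC'.trans hS) h2 h2' hne⟩
    obtain ⟨i, -, rfl⟩ := mem_image.1 (hS hx)
    exact hfW (Set.mem_range_self _)

section Webs

variable [DecidableEq V] {G : SimpleGraph V} {W : Finset V}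
  {Λ : ∀ x y : V, x ∈ W → y ∈ W → x ≠ y → G.Walk x y}

variable (G W Λ) in
def InteriorsTouch (C C' : Finset V) : Prop :=
  ∀ x y x' y' (hx : x ∈ W) (hy : y ∈ W) (hx' : x' ∈ W) (hy' : y' ∈ W) (hxy : x ≠ y)
    (hxy' : x' ≠ y'), C = {x, y} → C' = {x', y'} →
    ¬ Anticomplete G (walkInterior G (Λ x y hx hy hxy)) (walkInterior G (Λ x' y' hx' hy' hxy'))

theorem IsWeb.walkInterior_eq_of_pair_eq (hweb : IsWeb G W Λ) {x y x' y' : V} (hx : x ∈ W)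
    (hy : y ∈ W) (hx' : x' ∈ W) (hy' : y' ∈ W) (hxy : x ≠ y) (hxy' : x' ≠ y')
    (h : ({x, y} : Finset V) = {x', y'}) :
    walkInterior G (Λ x y hx hy hxy) = walkInterior G (Λ x' y' hx' hy' hxy') := by
  rw [← coe_inj, coe_pair, coe_pair, Set.pair_eq_pair_iff] at h
  obtain ⟨rfl, rfl⟩ | ⟨rfl, rfl⟩ := h
  · rfl
  · rw [hweb.symm x y hx hy hxy]
    ext v
    simp [walkInterior, Set.pair_comm x y]

theorem IsWeb.anticomplete_of_not_interiorsTouch (hweb : IsWeb G W Λ) {x y x' y' : V}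
    (hx : x ∈ W) (hy : y ∈ W) (hx' : x' ∈ W) (hy' : y' ∈ W) (hxy : x ≠ y) (hxy' : x' ≠ y')
    (h : ¬ InteriorsTouch G W Λ {x, y} {x', y'}) :
    Anticomplete G (walkInterior G (Λ x y hx hy hxy)) (walkInterior G (Λ x' y' hx' hy' hxy')) := by
  simp only [InteriorsTouch, not_forall, not_not] at h
  obtain ⟨a, b, a', b', ha, hb, ha', hb', hab, hab', h, h', hA⟩ := h
  rwa [hweb.walkInterior_eq_of_pair_eq hx hy ha hb hxy hab h,
    hweb.walkInterior_eq_of_pair_eq hx' hy' ha' hb' hxy' hab' h']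

end Webs

theorem statement_3_general (c s : ℕ) :
    ∃ σ : ℕ, 0 < σ ∧
      ∀ (V : Type) [Fintype V] [DecidableEq V] (G : SimpleGraph V) (W : Finset V)
        (Λ : ∀ x y : V, x ∈ W → y ∈ W → x ≠ y → G.Walk x y),
        IsWeb G W Λ → W.card = σ →
        -- (a)
        (∃ 𝓒 𝓒' : Finset (Finset V), Disjoint 𝓒 𝓒' ∧ 𝓒.card = c ∧ 𝓒'.card = c ∧
          (∀ C ∈ 𝓒 ∪ 𝓒', C.card = 2 ∧ C ⊆ W) ∧
          (∀ C ∈ 𝓒, ∀ C' ∈ 𝓒',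
            ∀ x y x' y' (hx : x ∈ W) (hy : y ∈ W) (hx' : x' ∈ W) (hy' : y' ∈ W)
              (hxy : x ≠ y) (hxy' : x' ≠ y'), C = {x, y} → C' = {x', y'} →
              ¬ Anticomplete G (walkInterior G (Λ x y hx hy hxy))
                  (walkInterior G (Λ x' y' hx' hy' hxy')))) ∨
        -- (b)
        (∃ S : Finset V, S ⊆ W ∧ S.card = s ∧
          (∀ x ∈ S, ∀ y ∈ S, ∀ x' ∈ S, ∀ y' ∈ S,
            ∀ (hx : x ∈ W) (hy : y ∈ W) (hx' : x' ∈ W) (hy' : y' ∈ W)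
              (hxy : x ≠ y) (hxy' : x' ≠ y'), ({x, y} : Set V) ≠ {x', y'} →
              Anticomplete G (walkInterior G (Λ x y hx hy hxy))
                (walkInterior G (Λ x' y' hx' hy' hxy')))) := by
  obtain ⟨N, hN⟩ := exists_crossing_families_or_free_subset c s
  refine ⟨N + 1, N.succ_pos, fun V _ _ G W Λ hweb hW ↦ ?_⟩
  rcases hN (InteriorsTouch G W Λ) W (by omega) with h | ⟨S, hSW, hS, hfree⟩
  · exact Or.inl h
  refine Or.inr ⟨S, hSW, hS, fun x hxS y hyS x' hx'S y' hy'S hx hy hx' hy' hxy hxy' hne ↦ ?_⟩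
  refine hweb.anticomplete_of_not_interiorsTouch hx hy hx' hy' hxy hxy' <|
    hfree _ (insert_subset hxS (singleton_subset_iff.2 hyS))
      _ (insert_subset hx'S (singleton_subset_iff.2 hy'S)) (card_pair hxy) (card_pair hxy') ?_
  exact fun h ↦ hne (by rw [← coe_pair, h, coe_pair])

/-- **Lemma 2.3.** For all `c, s ∈ ℕ⁺` there is `σ = σ(c,s) ∈ ℕ⁺` such that for every
graph `G` and every `σ`-web `(W, Λ)` in `G`, one of the following holds:
(a) there are disjoint collections `𝓒, 𝓒'` of 2-subsets of `W`, each of size `c`, such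
that `Λ*_{x,y}` and `Λ*_{x',y'}` are not anticomplete for every `{x,y} ∈ 𝓒` and
`{x',y'} ∈ 𝓒'`; (b) there is an `s`-subset `S ⊆ W` such that `Λ*_{x,y}` and
`Λ*_{x',y'}` are anticomplete for all distinct 2-subsets `{x,y}, {x',y'}` of `S`. -/
theorem statement_3 (c s : ℕ) (hc : 0 < c) (hs : 0 < s) :
    ∃ σ : ℕ, 0 < σ ∧
      ∀ (V : Type) [Fintype V] [DecidableEq V] (G : SimpleGraph V) (W : Finset V)
        (Λ : ∀ x y : V, x ∈ W → y ∈ W → x ≠ y → G.Walk x y),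
        IsWeb G W Λ → W.card = σ →
        -- (a)
        (∃ 𝓒 𝓒' : Finset (Finset V), Disjoint 𝓒 𝓒' ∧ 𝓒.card = c ∧ 𝓒'.card = c ∧
          (∀ C ∈ 𝓒 ∪ 𝓒', C.card = 2 ∧ C ⊆ W) ∧
          (∀ C ∈ 𝓒, ∀ C' ∈ 𝓒',
            ∀ x y x' y' (hx : x ∈ W) (hy : y ∈ W) (hx' : x' ∈ W) (hy' : y' ∈ W)
              (hxy : x ≠ y) (hxy' : x' ≠ y'), C = {x, y} → C' = {x', y'} →
              ¬ Anticomplete G (walkInterior G (Λ x y hx hy hxy))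
                  (walkInterior G (Λ x' y' hx' hy' hxy')))) ∨
        -- (b)
        (∃ S : Finset V, S ⊆ W ∧ S.card = s ∧
          (∀ x ∈ S, ∀ y ∈ S, ∀ x' ∈ S, ∀ y' ∈ S,
            ∀ (hx : x ∈ W) (hy : y ∈ W) (hx' : x' ∈ W) (hy' : y' ∈ W)
              (hxy : x ≠ y) (hxy' : x' ≠ y'), ({x, y} : Set V) ≠ {x', y'} →
              Anticomplete G (walkInterior G (Λ x y hx hy hxy))
                (walkInterior G (Λ x' y' hx' hy' hxy')))) :=
  statement_3_general c s
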